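/- Let Λ be a complete noetherian local ring whose residue field has characteristic p > 0, and let G be a finite p-group. Then every finitely generated projective module over the group algebra Λ[G] is a free Λ[G]-module. -/

import Mathlib

/-!
Reducing coefficients modulo the maximal ideal `𝔪` of `Λ` maps `Λ[G]` onto `k[G]`, `k` the residue
field. Its kernel `𝔪 • Λ[G]` consists of elements `y` with `1 + y` invertible (Nakayama, `Λ[G]`
being finite over `Λ`), and the augmentation ideal of `k[G]` is nil: for a central `g ≠ 1` of order
`p ^ k`, an element of the kernel of `k[G] → k[G/⟨g⟩]` is `a * (g - 1)`, whose `p ^ k`-th power is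
`a ^ p ^ k * (g ^ p ^ k - 1) = 0`, so induction on `|G|` applies. Hence `Λ[G]` is a
(noncommutative) local ring, and a finitely generated projective module over a local ring is free
(Kaplansky).
-/

open IsLocalRing

theorem Algebra.isStablyFiniteRing_of_free (R A : Type*) [CommRing R] [Ring A] [Algebra R A]
    [Module.Free R A] [Module.Finite R A] : IsStablyFiniteRing A :=
  .of_injective (Algebra.lmul R A) fun a b h => by simpa using congr($h 1)

theorem isLocalHom_of_surjective_of_isUnit_one_add {A B : Type*} [Ring A] [Ring B]
    [IsDedekindFiniteMonoid A] (f : A →+* B) (hf : Function.Surjective f)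
    (h : ∀ y, f y = 0 → IsUnit (1 + y)) : IsLocalHom f where
  map_nonunit a ha := by
    obtain ⟨b, hb⟩ := hf ↑ha.unit⁻¹
    have := h (a * b - 1) (by simp [hb])
    rw [add_sub_cancel] at this
    exact isUnit_of_mul_isUnit_left this

theorem isUnit_one_add_of_mem_smul_top {R A : Type*} [CommRing R] [Ring A] [Algebra R A]
    [Module.Finite R A] [IsDedekindFiniteMonoid A] {I : Ideal R} (hI : I ≤ Ideal.jacobson ⊥)
    {y : A} (hy : y ∈ I • (⊤ : Submodule R A)) : IsUnit (1 + y) := by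
  have hmul (x : A) : y * x ∈ I • (⊤ : Submodule R A) := by
    have := Submodule.mem_map_of_mem (f := LinearMap.mulRight R x) hy
    rw [Submodule.map_smul''] at this
    exact Submodule.smul_mono le_rfl le_top this
  have htop : ⊤ ≤ LinearMap.range (LinearMap.mulLeft R (1 + y)) :=
    Submodule.le_of_le_smul_of_le_jacobson_bot Module.Finite.fg_top hI fun x _ => by
      rw [show x = (1 + y) * x - y * x by noncomm_ring]
      exact Submodule.sub_mem_sup ⟨x, rfl⟩ (hmul x)
  obtain ⟨r, hr⟩ := htop (Submodule.mem_top (x := 1))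
  exact IsUnit.of_mul_eq_one r hr

section Kaplansky

variable {S : Type*} [Ring S]

theorem exists_surjective_fin_of_map_eq_zero {M : Type*} [AddCommGroup M] [Module S M] {n : ℕ}
    {q : (Fin (n + 1) → S) →ₗ[S] M} (hq : Function.Surjective q) {v : Fin (n + 1) → S}
    (hv : v 0 = 1) (hqv : q v = 0) : ∃ q' : (Fin n → S) →ₗ[S] M, Function.Surjective q' := by
  refine ⟨q ∘ₗ (Fin.consLinearEquiv S fun _ => S).toLinearMap ∘ₗ LinearMap.inr S S _, fun m => ?_⟩
  obtain ⟨x, rfl⟩ := hq m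
  have hx : Fin.cons 0 (Fin.tail (x - x 0 • v)) = x - x 0 • v := by
    conv_rhs => rw [← Fin.cons_self_tail (x - x 0 • v)]
    simp [hv]
  refine ⟨Fin.tail (x - x 0 • v), ?_⟩
  change q (Fin.cons 0 (Fin.tail (x - x 0 • v))) = q x
  rw [hx, map_sub, map_smul, hqv, smul_zero, sub_zero]

theorem Module.free_of_surjective_fin [IsLocalRing S] {n : ℕ} {P : Type*} [AddCommGroup P]
    [Module S P] [Module.Projective S P] (q : (Fin n → S) →ₗ[S] P) (hq : Function.Surjective q) :
    Module.Free S P := by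
  induction n generalizing P with
  | zero =>
    have : Subsingleton P := (hq.comp (Equiv.refl _).surjective).subsingleton
    exact Module.Free.of_subsingleton S P
  | succ n ih =>
  obtain ⟨σ, hσ⟩ := Module.projective_lifting_property q LinearMap.id hq
  have hqσ (x : P) : q (σ x) = x := LinearMap.congr_fun hσ x
  let φ : P →ₗ[S] S := LinearMap.proj 0 ∘ₗ σ
  let e₀ : Fin (n + 1) → S := Pi.single 0 1
  -- Either the first generator is redundant, or `φ` splits off a free summand `S` of `P`.
  rcases IsLocalRing.isUnit_or_isUnit_of_add_one (sub_add_cancel 1 (φ (q e₀))) with hc | hc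
  · let v := ((hc.unit⁻¹ : Sˣ) : S) • (e₀ - σ (q e₀))
    obtain ⟨q', hq'⟩ := exists_surjective_fin_of_map_eq_zero hq (v := v)
      (by simp [v, e₀, φ]) (by simp [v, hqσ])
    exact ih q' hq'
  · let K := LinearMap.ker φ
    obtain ⟨e, he_inl, he_snd⟩ : ∃ e : P ≃ₗ[S] K × S,
        K.subtype = e.symm ∘ₗ LinearMap.inl S K S ∧ φ = LinearMap.snd S K S ∘ₗ e :=
      ⟨_, ((LinearMap.exact_subtype_ker_map φ).splitSurjectiveEquiv Subtype.val_injective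
        ⟨LinearMap.toSpanSingleton S P (((hc.unit⁻¹ : Sˣ) : S) • q e₀), by ext; simp [φ, e₀]⟩).2⟩
    have : Module.Projective S K :=
      .of_split K.subtype (LinearMap.fst S K S ∘ₗ e) (by rw [he_inl]; ext; simp)
    have hφ : φ (e.symm (0, 1)) = 1 := by simp [he_snd]
    obtain ⟨q', hq'⟩ := exists_surjective_fin_of_map_eq_zero
      (q := LinearMap.fst S K S ∘ₗ e ∘ₗ q) (Prod.fst_surjective.comp (e.surjective.comp hq))
      (v := σ (e.symm (0, 1))) hφ (by simp [hqσ])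
    have := ih q' hq'
    exact Module.Free.of_equiv e.symm

theorem Module.free_of_projective_of_isLocalRing [IsLocalRing S] {P : Type*} [AddCommGroup P]
    [Module S P] [Module.Finite S P] [Module.Projective S P] : Module.Free S P :=
  have ⟨_, q, hq⟩ := Module.Finite.exists_fin' S P
  Module.free_of_surjective_fin q hq

end Kaplansky

theorem Subgroup.card_quotient_zpowers_lt {G : Type*} [Group G] [Finite G] {g : G}
    (hg : g ≠ 1) : Nat.card (G ⧸ Subgroup.zpowers g) < Nat.card G := by
  rw [Subgroup.card_eq_card_quotient_mul_card_subgroup (Subgroup.zpowers g)]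
  exact lt_mul_of_one_lt_right Nat.card_pos
    ((Subgroup.one_lt_card_iff_ne_bot _).mpr (Subgroup.zpowers_eq_bot.not.mpr hg))

namespace MonoidAlgebra

variable {R G : Type*} [CommRing R]

variable (R G) in
noncomputable def augmentation [Monoid G] : MonoidAlgebra R G →ₐ[R] R :=
  lift R R G 1

@[simp]
lemma augmentation_single [Monoid G] (g : G) (r : R) : augmentation R G (single g r) = r := by
  simp [augmentation, lift_single]

lemma augmentation_mapDomainRingHom [Monoid G] {H : Type*} [Monoid H] (f : G →* H)
    (x : MonoidAlgebra R G) : augmentation R H (mapDomainRingHom R f x) = augmentation R G x := by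
  induction x using induction_linear with
  | zero => simp
  | add x y hx hy => rw [map_add, map_add, map_add, hx, hy]
  | single g r => simp

lemma eq_algebraMap_augmentation [Monoid G] [Subsingleton G] (x : MonoidAlgebra R G) :
    x = algebraMap R _ (augmentation R G x) := by
  induction x using induction_linear with
  | zero => simp
  | add x y hx hy => rw [map_add, map_add, ← hx, ← hy]
  | single g r => simp [Subsingleton.elim g 1]

lemma mem_span_of_sub_one_of_mapDomain_eq_zero [Group G] {H : Subgroup G}
    {x : MonoidAlgebra R G} (hx : mapDomain (QuotientGroup.mk : G → G ⧸ H) x = 0) :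
    x ∈ Ideal.span ((fun h : G => of R G h - 1) '' H) := by
  set I := Ideal.span ((fun h : G => of R G h - 1) '' H)
  let lift : MonoidAlgebra R (G ⧸ H) → MonoidAlgebra R G := mapDomain Quotient.out
  suffices h : ∀ y, y - lift (mapDomain QuotientGroup.mk y) ∈ I by
    simpa [hx, lift, mapDomain_zero] using h x
  intro y
  induction y using induction_linear with
  | zero => simp [lift, mapDomain_zero]
  | add y z hy hz =>
    simpa [lift, mapDomain_add, add_sub_add_comm] using I.add_mem hy hz
  | single a r =>
    set b := (QuotientGroup.mk a : G ⧸ H).out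
    have hba : b⁻¹ * a ∈ H := QuotientGroup.eq.mp (Quotient.out_eq _)
    have : single a r - single b r = single b r * (of R G (b⁻¹ * a) - 1) := by
      simp [mul_sub, single_mul_single]
    simp only [lift, mapDomain_single]
    rw [this]
    exact I.mul_mem_left _ (Ideal.subset_span ⟨_, hba, rfl⟩)

lemma of_sub_one_mem_span_of_mem_zpowers [Group G] {g h : G} (hh : h ∈ Subgroup.zpowers g) :
    of R G h - 1 ∈ Ideal.span {of R G g - 1} := by
  set I := Ideal.span {of R G g - 1}
  let K : Subgroup G :=
    { carrier := {h | of R G h - 1 ∈ I}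
      mul_mem' := fun {a b} ha hb => by
        have : of R G (a * b) - 1 = of R G a * (of R G b - 1) + (of R G a - 1) := by
          simp only [map_mul]; noncomm_ring
        rw [Set.mem_ofPred_eq, this]
        exact I.add_mem (I.mul_mem_left _ hb) ha
      one_mem' := by simp [Set.mem_ofPred_eq, ← one_def]
      inv_mem' := fun {a} ha => by
        have : of R G a⁻¹ - 1 = -(of R G a⁻¹ * (of R G a - 1)) := by
          rw [mul_sub, ← map_mul, inv_mul_cancel, map_one, mul_one]; abel
        rw [Set.mem_ofPred_eq, this]
        exact I.neg_mem (I.mul_mem_left _ ha) }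
  exact (Subgroup.zpowers_le (H := K)).mpr (Ideal.subset_span rfl) hh

lemma mem_smul_top_of_forall_coeff_mem [Monoid G] {I : Ideal R} {x : MonoidAlgebra R G}
    (hx : ∀ g, x.coeff g ∈ I) : x ∈ I • (⊤ : Submodule R (MonoidAlgebra R G)) := by
  rw [← sum_coeff_single x]
  refine Submodule.finsuppSum_mem _ _ _ _ fun g _ => ?_
  have := Submodule.smul_mem_smul (hx g) (Submodule.mem_top (x := (single g 1 : MonoidAlgebra R G)))
  rwa [smul_single', mul_one] at this

instance [Group G] [Finite G] : IsStablyFiniteRing (MonoidAlgebra R G) :=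
  Algebra.isStablyFiniteRing_of_free R _

theorem isLocalHom_mapRingHom [Group G] [Finite G] {S : Type*} [CommRing S] (f : R →+* S)
    (hf : Function.Surjective f) (hker : RingHom.ker f ≤ Ideal.jacobson ⊥) :
    IsLocalHom (mapRingHom G f) :=
  isLocalHom_of_surjective_of_isUnit_one_add _ (map_surjective _ hf) fun y hy =>
    isUnit_one_add_of_mem_smul_top hker <| mem_smul_top_of_forall_coeff_mem fun g => by
      simpa using congr(($hy).coeff g)

variable (p : ℕ) [Fact p.Prime]

lemma of_sub_one_pow_eq_zero [CharP R p] [Monoid G] {g : G} {k : ℕ} (hg : g ^ p ^ k = 1) :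
    (of R G g - 1) ^ p ^ k = 0 := by
  have := charP_of_injective_algebraMap' R (A := MonoidAlgebra R G) p
  rw [sub_pow_char_pow_of_commute p k (Commute.one_right _), ← map_pow, hg, map_one, one_pow,
    sub_self]

lemma isNilpotent_of_isNilpotent_mapDomainRingHom [CharP R p] [Group G] {g : G}
    (hg : g ∈ Subgroup.center G) {k : ℕ} (hgk : g ^ p ^ k = 1) [(Subgroup.zpowers g).Normal]
    {x : MonoidAlgebra R G}
    (hx : IsNilpotent (mapDomainRingHom R (QuotientGroup.mk' (Subgroup.zpowers g)) x)) :
    IsNilpotent x := by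
  obtain ⟨N, hN⟩ := hx
  have hker : x ^ N ∈ Ideal.span {of R G g - 1} := by
    rw [← map_pow] at hN
    refine (Ideal.span_le.mpr ?_) (mem_span_of_sub_one_of_mapDomain_eq_zero hN)
    rintro _ ⟨h, hh, rfl⟩
    exact of_sub_one_mem_span_of_mem_zpowers hh
  obtain ⟨a, ha⟩ := Ideal.mem_span_singleton'.mp hker
  have hcomm : Commute a (of R G g - 1) :=
    ((single_commute (fun h => (Subgroup.mem_center_iff.mp hg h).symm) (Commute.all 1) a).symm
      ).sub_right (Commute.one_right a)
  refine ⟨N * p ^ k, ?_⟩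
  rw [pow_mul, ← ha, hcomm.mul_pow, of_sub_one_pow_eq_zero p hgk, mul_zero]

theorem isNilpotent_of_augmentation_eq_zero [CharP R p] [Group G] [Finite G] (hG : IsPGroup p G)
    {x : MonoidAlgebra R G} (hx : augmentation R G x = 0) : IsNilpotent x := by
  induction h : Nat.card G using Nat.strong_induction_on generalizing G with
  | _ n ih =>
  rcases subsingleton_or_nontrivial G with _ | _
  · rw [eq_algebraMap_augmentation x, hx, map_zero]
    exact IsNilpotent.zero
  have := hG.center_nontrivial
  obtain ⟨⟨g, hg⟩, hz⟩ := exists_ne (1 : Subgroup.center G)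
  have hg1 : g ≠ 1 := fun h => hz (Subtype.ext h)
  obtain ⟨k, hk⟩ := IsPGroup.iff_orderOf.mp hG g
  have : (Subgroup.zpowers g).Normal :=
    ⟨fun n hn x => by
      rwa [Subgroup.mem_center_iff.mp (Subgroup.zpowers_le.mpr hg hn) x, mul_inv_cancel_right]⟩
  refine isNilpotent_of_isNilpotent_mapDomainRingHom p hg (hk ▸ pow_orderOf_eq_one g) ?_
  exact ih _ (h ▸ Subgroup.card_quotient_zpowers_lt hg1) (hG.to_quotient _)
    (by rw [augmentation_mapDomainRingHom, hx]) rfl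

theorem isLocalHom_augmentation [CharP R p] [Group G] [Finite G] (hG : IsPGroup p G) :
    IsLocalHom (augmentation R G : MonoidAlgebra R G →+* R) :=
  isLocalHom_of_surjective_of_isUnit_one_add _ (fun r => ⟨single 1 r, by simp⟩) fun _ hy =>
    (isNilpotent_of_augmentation_eq_zero p hG hy).isUnit_one_add

theorem isLocalRing [IsLocalRing R] [CharP (ResidueField R) p] [Group G] [Finite G]
    (hG : IsPGroup p G) : IsLocalRing (MonoidAlgebra R G) :=
  have := isLocalHom_augmentation p hG (R := ResidueField R)
  have := isLocalHom_mapRingHom (G := G) (residue R) residue_surjective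
    (by rw [ker_residue]; exact maximalIdeal_le_jacobson ⊥)
  ((augmentation (ResidueField R) G : MonoidAlgebra (ResidueField R) G →+* ResidueField R).comp
    (mapRingHom G (residue R))).domain_isLocalRing

end MonoidAlgebra

theorem projective_monoidAlgebra_free_general (Λ : Type u) [CommRing Λ] [IsLocalRing Λ]
    (p : ℕ) [Fact p.Prime] [CharP (IsLocalRing.ResidueField Λ) p]
    (G : Type u) [Group G] [Finite G] (hG : IsPGroup p G)
    (P : Type v) [AddCommGroup P] [Module (MonoidAlgebra Λ G) P]
    [Module.Finite (MonoidAlgebra Λ G) P] [Module.Projective (MonoidAlgebra Λ G) P] :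
    Module.Free (MonoidAlgebra Λ G) P :=
  have := MonoidAlgebra.isLocalRing (R := Λ) p hG
  Module.free_of_projective_of_isLocalRing

/-- If `Λ` is a complete noetherian local (commutative) ring whose residue field
has characteristic `p > 0`, and `G` is a finite `p`-group, then every finitely
generated projective module over the group algebra `Λ[G]` is free. -/
theorem projective_monoidAlgebra_free (Λ : Type u) [CommRing Λ] [IsLocalRing Λ]
    [IsNoetherianRing Λ] [IsAdicComplete (IsLocalRing.maximalIdeal Λ) Λ]
    (p : ℕ) [Fact p.Prime] [CharP (IsLocalRing.ResidueField Λ) p]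
    (G : Type u) [Group G] [Finite G] (hG : IsPGroup p G)
    (P : Type v) [AddCommGroup P] [Module (MonoidAlgebra Λ G) P]
    [Module.Finite (MonoidAlgebra Λ G) P] [Module.Projective (MonoidAlgebra Λ G) P] :
    Module.Free (MonoidAlgebra Λ G) P :=
  projective_monoidAlgebra_free_general Λ p G hG P
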